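/- Fix real parameters a1, a2, a3, b1, b2 and reals c7, s7 with c7^2 + s7^2 = 1. Every real solution (c1, s1, c2, s2) of the system L1 satisfies 2*a1*a2*c2 = a1^2 + a2^2 - n4 and 4*a1^2*a2^2*s2^2 = n3*(4*a1*a2 - n3), where n4 = b1^2 + b2^2 + a3^2 + 2*a3*(b2*c7 - b1*s7) and n3 = n4 - (a1-a2)^2. In particular, if L1 has a real solution then n3*(4*a1*a2 - n3) ≥ 0. -/
import Mathlib


/-- The quantity `n4 = b1^2 + b2^2 + a3^2 + 2*a3*(b2*c7 - b1*s7)`. -/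
noncomputable def n4 (a3 b1 b2 c7 s7 : ℝ) : ℝ :=
  b1 ^ 2 + b2 ^ 2 + a3 ^ 2 + 2 * a3 * (b2 * c7 - b1 * s7)

/-- The quantity `n3 = n4 - (a1-a2)^2`. -/
noncomputable def n3 (a1 a2 a3 b1 b2 c7 s7 : ℝ) : ℝ :=
  n4 a3 b1 b2 c7 s7 - (a1 - a2) ^ 2

/-- The system `L1` in the variables `(c1, s1, c2, s2)`. -/
def L1 (a1 a2 a3 b1 b2 c7 s7 c1 s1 c2 s2 : ℝ) : Prop :=
  a2 * (-(c1 * c2) + s1 * s2) + a1 * c1 + a3 * s7 - b1 = 0 ∧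
  a2 * (-(s1 * c2) - c1 * s2) + a1 * s1 - a3 * c7 - b2 = 0 ∧
  c1 ^ 2 + s1 ^ 2 = 1 ∧ c2 ^ 2 + s2 ^ 2 = 1

/-- Every real solution of `L1` satisfies `2*a1*a2*c2 = a1^2 + a2^2 - n4` and
`4*a1^2*a2^2*s2^2 = n3*(4*a1*a2 - n3)`; in particular, if `L1` has a real
solution then `n3*(4*a1*a2 - n3) ≥ 0`. -/
theorem L1_solution_relations (a1 a2 a3 b1 b2 c7 s7 : ℝ)
    (h7 : c7 ^ 2 + s7 ^ 2 = 1) :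
    (∀ c1 s1 c2 s2 : ℝ, L1 a1 a2 a3 b1 b2 c7 s7 c1 s1 c2 s2 →
      2 * a1 * a2 * c2 = a1 ^ 2 + a2 ^ 2 - n4 a3 b1 b2 c7 s7 ∧
      4 * a1 ^ 2 * a2 ^ 2 * s2 ^ 2 =
        n3 a1 a2 a3 b1 b2 c7 s7 * (4 * a1 * a2 - n3 a1 a2 a3 b1 b2 c7 s7)) ∧
    ((∃ c1 s1 c2 s2 : ℝ, L1 a1 a2 a3 b1 b2 c7 s7 c1 s1 c2 s2) →
      n3 a1 a2 a3 b1 b2 c7 s7 * (4 * a1 * a2 - n3 a1 a2 a3 b1 b2 c7 s7) ≥ 0) := by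
  have main : ∀ c1 s1 c2 s2 : ℝ, L1 a1 a2 a3 b1 b2 c7 s7 c1 s1 c2 s2 →
      2 * a1 * a2 * c2 = a1 ^ 2 + a2 ^ 2 - n4 a3 b1 b2 c7 s7 ∧
      4 * a1 ^ 2 * a2 ^ 2 * s2 ^ 2 =
        n3 a1 a2 a3 b1 b2 c7 s7 * (4 * a1 * a2 - n3 a1 a2 a3 b1 b2 c7 s7) := by
    intro c1 s1 c2 s2 ⟨h1, h2, h3, h4⟩
    have key : 2 * a1 * a2 * c2 = a1 ^ 2 + a2 ^ 2 - n4 a3 b1 b2 c7 s7 := by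
      have q1 : (a2 * (-(c1 * c2) + s1 * s2) + a1 * c1) ^ 2 = (b1 - a3 * s7) ^ 2 := by
        have : a2 * (-(c1 * c2) + s1 * s2) + a1 * c1 = b1 - a3 * s7 := by linarith
        rw [this]
      have q2 : (a2 * (-(s1 * c2) - c1 * s2) + a1 * s1) ^ 2 = (b2 + a3 * c7) ^ 2 := by
        have : a2 * (-(s1 * c2) - c1 * s2) + a1 * s1 = b2 + a3 * c7 := by linarith
        rw [this]
      simp only [n4]
      linear_combination (-1)*q1 + (-1)*q2 +
        (a1^2 + a2^2*(c2^2+s2^2) - 2*a1*a2*c2)*h3 + a2^2*h4 - a3^2*h7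
    refine ⟨key, ?_⟩
    simp only [n3, n4] at key ⊢
    linear_combination
      (-(a1^2 + a2^2 - (b1^2 + b2^2 + a3^2 + 2*a3*(b2*c7 - b1*s7)) + 2*a1*a2*c2))*key +
      (4*a1^2*a2^2)*h4
  exact ⟨main, fun ⟨c1, s1, c2, s2, h⟩ => by
    have := (main c1 s1 c2 s2 h).2
    nlinarith [sq_nonneg (a1 * a2 * s2)]⟩
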